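/- arXiv:0806.1033 — 4 statements merged into one kernel-verified Lean document; each statement's English description precedes it below -/
import Mathlib

section
/- Let S be a set and for each s ∈ S let k_s be a field. Every maximal ideal of the product ring ∏_{s∈S} k_s is of the form I_U = {f : {s : f_s = 0} ∈ U} for some ultrafilter U on S. -/
/-!
In `Π s, k s` every element `f` generates the same ideal as the idempotent supported off its zero
set (`f = (f * f⁻¹) * f` pointwise), so membership in an ideal `I` depends only on zero sets, and
the zero sets of elements of `I` form a filter. When `I` is prime, the idempotents `𝟙_{Aᶜ}` and
`𝟙_A` multiply to `0`, so `A` or `Aᶜ` is a zero set of `I`, making that filter an ultrafilter.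
-/

open Filter

namespace Pi

variable {S : Type*} {k : S → Type*} [∀ s, DivisionRing (k s)]

theorem mem_ideal_of_zeroSet_subset {I : Ideal (∀ s, k s)} {f g : ∀ s, k s} (hf : f ∈ I)
    (h : {s | f s = 0} ⊆ {s | g s = 0}) : g ∈ I := by
  have hg : g = (g * f⁻¹) * f := by
    funext s
    by_cases hs : f s = 0
    · have hgs : g s = 0 := h hs
      simp [hs, hgs]
    · simp [inv_mul_cancel_right₀ hs]
  rw [hg]
  exact I.mul_mem_left _ hf

theorem exists_mem_ideal_zeroSet_eq_inter {I : Ideal (∀ s, k s)} {f g : ∀ s, k s} (hf : f ∈ I)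
    (hg : g ∈ I) : ∃ h ∈ I, {s | h s = 0} = {s | f s = 0} ∩ {s | g s = 0} := by
  -- `1 - f⁻¹ * f` is the indicator function of the zero set of `f`
  refine ⟨f + (1 - f⁻¹ * f) * g, I.add_mem hf (I.mul_mem_left _ hg), ?_⟩
  ext s
  by_cases hs : f s = 0 <;> simp [hs]

def zeroSetFilter (I : Ideal (∀ s, k s)) : Filter S where
  sets := {A | ∃ f ∈ I, {s | f s = 0} ⊆ A}
  univ_sets := ⟨0, I.zero_mem, Set.subset_univ _⟩
  sets_of_superset := fun ⟨f, hf, hA⟩ hAB => ⟨f, hf, hA.trans hAB⟩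
  inter_sets := fun ⟨f, hf, hA⟩ ⟨g, hg, hB⟩ => by
    obtain ⟨h, hh, hzero⟩ := exists_mem_ideal_zeroSet_eq_inter hf hg
    exact ⟨h, hh, hzero ▸ Set.inter_subset_inter hA hB⟩

theorem zeroSet_mem_zeroSetFilter_iff {I : Ideal (∀ s, k s)} {f : ∀ s, k s} :
    {s | f s = 0} ∈ zeroSetFilter I ↔ f ∈ I :=
  ⟨fun ⟨_, hg, hsub⟩ => mem_ideal_of_zeroSet_subset hg hsub, fun hf => ⟨f, hf, subset_rfl⟩⟩

theorem empty_notMem_zeroSetFilter {I : Ideal (∀ s, k s)} (hI : I ≠ ⊤) :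
    ∅ ∉ zeroSetFilter I := by
  rintro ⟨f, hf, hempty⟩
  refine hI (I.eq_top_of_isUnit_mem hf (Pi.isUnit_iff.2 fun s => ?_))
  exact isUnit_iff_ne_zero.2 fun hs => hempty hs

theorem mem_or_compl_mem_zeroSetFilter {I : Ideal (∀ s, k s)} (hI : I.IsPrime) (A : Set S) :
    A ∈ zeroSetFilter I ∨ Aᶜ ∈ zeroSetFilter I := by
  classical
  set e : ∀ s, k s := A.piecewise 0 1
  have he : {s | e s = 0} = A := by
    ext s
    by_cases hs : s ∈ A <;> simp [e, hs]
  have he' : {s | (1 - e) s = 0} = Aᶜ := by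
    ext s
    by_cases hs : s ∈ A <;> simp [e, hs]
  have hprod : e * (1 - e) ∈ I := by
    convert I.zero_mem
    funext s
    by_cases hs : s ∈ A <;> simp [e, hs]
  rw [← he', ← he, zeroSet_mem_zeroSetFilter_iff, zeroSet_mem_zeroSetFilter_iff]
  exact hI.mem_or_mem hprod

def zeroSetUltrafilter (I : Ideal (∀ s, k s)) (hI : I.IsPrime) : Ultrafilter S :=
  .ofComplNotMemIff (zeroSetFilter I) fun A => by
    refine ⟨(mem_or_compl_mem_zeroSetFilter hI A).resolve_right, fun hA hAc => ?_⟩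
    exact empty_notMem_zeroSetFilter hI.ne_top (by simpa using inter_mem hA hAc)

theorem zeroSet_mem_zeroSetUltrafilter_iff {I : Ideal (∀ s, k s)} (hI : I.IsPrime) {f : ∀ s, k s} :
    {s | f s = 0} ∈ zeroSetUltrafilter I hI ↔ f ∈ I :=
  zeroSet_mem_zeroSetFilter_iff

end Pi

/-- Every maximal ideal of a product of fields `Π s, k s` is of the
form `I_U = {f | {s | f s = 0} ∈ U}` for some ultrafilter `U` on `S`. -/
theorem duBois_stmt4 (S : Type*) (k : S → Type*) [∀ s, Field (k s)]
    (I : Ideal (∀ s, k s)) (hI : I.IsMaximal) :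
    ∃ U : Ultrafilter S, ∀ f : ∀ s, k s, f ∈ I ↔ {s | f s = 0} ∈ U :=
  ⟨Pi.zeroSetUltrafilter I hI.isPrime, fun _ => (Pi.zeroSet_mem_zeroSetUltrafilter_iff _).symm⟩
end

section
/- Let S be a set and for each s ∈ S let k_s be a field. Every prime ideal of the product ring ∏_{s∈S} k_s is maximal, and arises as I_U for an ultrafilter U on S. -/
/-!
A product of fields is von Neumann regular: `f = f * f⁻¹ * f` with the pointwise inverse. In such
a ring `f * (1 - f⁻¹ * f) = 0`, so modulo a prime either `f` vanishes or `f⁻¹` inverts it, and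
every prime ideal is maximal.

For the ultrafilter, attach to each `T ⊆ S` the idempotent `zeroOn T`, equal to `0` on `T` and `1`
off `T`. The sets `T` with `zeroOn T ∈ I` form a filter, and `f ∈ I` iff its zero set lies in it,
because `zeroOn {s | f s = 0} = f * f⁻¹`. If `I` is prime, then `zeroOn T * zeroOn Tᶜ = 0` puts `T` or
`Tᶜ` into the filter, so it is an ultrafilter.
-/

open Set

theorem Ring.krullDimLE_zero_of_forall_exists_mul_mul_eq {R : Type*} [CommRing R]
    (hR : ∀ x : R, ∃ y, x * y * x = x) : Ring.KrullDimLE 0 R := by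
  refine .mk₀ fun I hI => Ideal.isMaximal_iff.2 ⟨fun h => hI.ne_top (I.eq_top_of_isUnit_mem h
    isUnit_one), fun J x hIJ hxI hxJ => ?_⟩
  obtain ⟨y, hxy⟩ := hR x
  have hx_kill : x * (1 - y * x) ∈ I := by
    rw [mul_sub, mul_one, ← mul_assoc, hxy, sub_self]
    exact I.zero_mem
  have h_compl : 1 - y * x ∈ J := hIJ ((hI.mem_or_mem hx_kill).resolve_left hxI)
  simpa using J.add_mem h_compl (J.mul_mem_left y hxJ)

namespace Pi

variable {S : Type*} {k : S → Type*} [∀ s, Field (k s)]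

theorem mul_inv_mul_cancel (f : ∀ s, k s) : f * f⁻¹ * f = f :=
  funext fun s => _root_.mul_inv_mul_cancel (f s)

instance : Ring.KrullDimLE 0 (∀ s, k s) :=
  Ring.krullDimLE_zero_of_forall_exists_mul_mul_eq fun f => ⟨f⁻¹, mul_inv_mul_cancel f⟩

open Classical in
noncomputable def zeroOn (T : Set S) : ∀ s, k s := T.piecewise 0 1

theorem zeroOn_univ : (zeroOn univ : ∀ s, k s) = 0 := by
  simp [zeroOn]

theorem zeroOn_empty : (zeroOn ∅ : ∀ s, k s) = 1 := by
  simp [zeroOn]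

theorem zeroOn_mul_zeroOn (T T' : Set S) :
    (zeroOn T * zeroOn T' : ∀ s, k s) = zeroOn (T ∪ T') := by
  funext s
  by_cases hs : s ∈ T <;> by_cases hs' : s ∈ T' <;> simp [zeroOn, hs, hs']

theorem zeroOn_inter (T T' : Set S) :
    (zeroOn (T ∩ T') : ∀ s, k s) = zeroOn T + zeroOn T' - zeroOn T * zeroOn T' := by
  funext s
  by_cases hs : s ∈ T <;> by_cases hs' : s ∈ T' <;> simp [zeroOn, hs, hs']

theorem zeroOn_zeroSet (f : ∀ s, k s) : zeroOn {s | f s = 0} = f * f⁻¹ := by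
  funext s
  by_cases hs : f s = 0 <;> simp [zeroOn, hs]

end Pi

namespace Ideal

open Pi

variable {S : Type*} {k : S → Type*} [∀ s, Field (k s)]

def vanishingFilter (I : Ideal (∀ s, k s)) : Filter S where
  sets := {T | zeroOn T ∈ I}
  univ_sets := by simp [zeroOn_univ]
  sets_of_superset {T T'} hT hTT' := by
    simpa [zeroOn_mul_zeroOn, union_eq_right.2 hTT'] using I.mul_mem_right (zeroOn T') hT
  inter_sets {T T'} hT hT' := by
    show zeroOn (T ∩ T') ∈ I
    rw [zeroOn_inter]
    exact I.sub_mem (I.add_mem hT hT') (I.mul_mem_right _ hT)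

theorem mem_vanishingFilter {I : Ideal (∀ s, k s)} {T : Set S} :
    T ∈ I.vanishingFilter ↔ zeroOn T ∈ I :=
  Iff.rfl

theorem mem_iff_zeroSet_mem_vanishingFilter (I : Ideal (∀ s, k s)) (f : ∀ s, k s) :
    f ∈ I ↔ {s | f s = 0} ∈ I.vanishingFilter := by
  rw [mem_vanishingFilter, zeroOn_zeroSet]
  refine ⟨fun hf => I.mul_mem_right _ hf, fun hf => ?_⟩
  rw [← Pi.mul_inv_mul_cancel f]
  exact I.mul_mem_right f hf

theorem IsPrime.compl_notMem_vanishingFilter_iff {I : Ideal (∀ s, k s)} (hI : I.IsPrime)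
    (T : Set S) : Tᶜ ∉ I.vanishingFilter ↔ T ∈ I.vanishingFilter := by
  refine ⟨fun hTc => ?_, fun hT hTc => ?_⟩
  · have h_prod : zeroOn T * zeroOn Tᶜ ∈ I := by
      rw [zeroOn_mul_zeroOn, union_compl_self, zeroOn_univ]
      exact I.zero_mem
    exact (hI.mem_or_mem h_prod).resolve_right hTc
  · have h_empty := Filter.inter_mem hT hTc
    rw [inter_compl_self, mem_vanishingFilter, zeroOn_empty] at h_empty
    exact hI.ne_top (I.eq_top_of_isUnit_mem h_empty isUnit_one)

def IsPrime.vanishingUltrafilter {I : Ideal (∀ s, k s)} (hI : I.IsPrime) : Ultrafilter S :=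
  .ofComplNotMemIff I.vanishingFilter hI.compl_notMem_vanishingFilter_iff

end Ideal

/-- Every prime ideal of a product of fields `Π s, k s` is maximal,
and arises as `I_U = {f | {s | f s = 0} ∈ U}` for some ultrafilter `U` on `S`. -/
theorem duBois_stmt5 (S : Type*) (k : S → Type*) [∀ s, Field (k s)]
    (I : Ideal (∀ s, k s)) (hI : I.IsPrime) :
    I.IsMaximal ∧ ∃ U : Ultrafilter S, ∀ f : ∀ s, k s, f ∈ I ↔ {s | f s = 0} ∈ U :=
  ⟨hI.isMaximal', hI.vanishingUltrafilter, I.mem_iff_zeroSet_mem_vanishingFilter⟩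
end

section
/- Let U be a filter on a set S, k_s fields, and for each s a cochain complex C_s^• of k_s-vector spaces. Then the cohomology of the filter product complex commutes with the quotient: H^i(∏_s C_s^• ⊗_{∏ k_s} (∏ k_s / U)) ≅ (∏_s H^i(C_s^•)) / U. -/
/-- The subgroup of a product of abelian groups consisting of families
vanishing on a set of the filter `F`. -/
def filterAddSubgroup (S : Type*) (F : Filter S) (V : S → Type*)
    [∀ s, AddCommGroup (V s)] : AddSubgroup (∀ s, V s) where
  carrier := {v | {s | v s = 0} ∈ F}
  zero_mem' := by simp
  add_mem' := by
    intro a b ha hb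
    exact Filter.mem_of_superset (Filter.inter_mem ha hb) fun s hs => by
      have h1 : a s = 0 := hs.1
      have h2 : b s = 0 := hs.2
      show a s + b s = 0
      simp [h1, h2]
  neg_mem' := by
    intro a ha
    exact Filter.mem_of_superset ha fun s hs => by
      have h1 : a s = 0 := hs
      show -a s = 0
      simp [h1]

/-- The componentwise map on products induced by a family of additive maps. -/
def piAddHom {S : Type*} {A B : S → Type*} [∀ s, AddCommGroup (A s)]
    [∀ s, AddCommGroup (B s)] (f : ∀ s, A s →+ B s) : (∀ s, A s) →+ (∀ s, B s) where
  toFun a s := f s (a s)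
  map_zero' := by ext s; simp
  map_add' a b := by ext s; simp

theorem piAddHom_le {S : Type*} (U : Filter S) {A B : S → Type*}
    [∀ s, AddCommGroup (A s)] [∀ s, AddCommGroup (B s)] (f : ∀ s, A s →+ B s) :
    filterAddSubgroup S U A ≤ (filterAddSubgroup S U B).comap (piAddHom f) := by
  intro a ha
  exact Filter.mem_of_superset ha fun s hs => by
    have h1 : a s = 0 := hs
    show f s (a s) = 0
    simp [h1]

/-!
Reduced products of abelian groups are exact. A family represents a cycle (a boundary) of the
reduced product exactly when `U`-almost all of its components are cycles (boundaries), and by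
`Filter.skolem` it then has the same class as an honest family of cycles (of boundaries). Hence
both sides are quotients of `∏_s ker g_s` by the same subgroup: the families that are
`U`-almost everywhere boundaries.
-/

open Filter

abbrev AddHomology {A B C : Type*} [AddCommGroup A] [AddCommGroup B] [AddCommGroup C]
    (f : A →+ B) (g : B →+ C) : Type _ :=
  g.ker ⧸ f.range.addSubgroupOf g.ker

theorem AddHomology.mk_eq_zero_iff {A B C : Type*} [AddCommGroup A] [AddCommGroup B]
    [AddCommGroup C] {f : A →+ B} {g : B →+ C} (z : g.ker) :
    (QuotientAddGroup.mk z : AddHomology f g) = 0 ↔ (z : B) ∈ f.range := by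
  rw [QuotientAddGroup.eq_zero_iff, AddSubgroup.mem_addSubgroupOf]

section FilterProduct

variable {S : Type*} (U : Filter S) {A B C : S → Type*}
  [∀ s, AddCommGroup (A s)] [∀ s, AddCommGroup (B s)] [∀ s, AddCommGroup (C s)]

abbrev FilterProduct (V : S → Type*) [∀ s, AddCommGroup (V s)] : Type _ :=
  (∀ s, V s) ⧸ filterAddSubgroup S U V

abbrev FilterProduct.map (f : ∀ s, A s →+ B s) : FilterProduct U A →+ FilterProduct U B :=
  QuotientAddGroup.map _ _ (piAddHom f) (piAddHom_le U f)

variable {U}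

theorem FilterProduct.mk_eq_zero_iff {V : S → Type*} [∀ s, AddCommGroup (V s)]
    (v : ∀ s, V s) : (QuotientAddGroup.mk v : FilterProduct U V) = 0 ↔ ∀ᶠ s in U, v s = 0 :=
  QuotientAddGroup.eq_zero_iff v

theorem FilterProduct.mk_eq_mk_iff {V : S → Type*} [∀ s, AddCommGroup (V s)]
    (v w : ∀ s, V s) :
    (QuotientAddGroup.mk v : FilterProduct U V) = QuotientAddGroup.mk w ↔
      ∀ᶠ s in U, v s = w s := by
  rw [← sub_eq_zero, ← QuotientAddGroup.mk_sub, mk_eq_zero_iff]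
  simp only [Pi.sub_apply, sub_eq_zero]

variable (U) (f : ∀ s, A s →+ B s) (g : ∀ s, B s →+ C s)

def cyclesToHomologyFilterProduct :
    (∀ s, (g s).ker) →+ AddHomology (FilterProduct.map U f) (FilterProduct.map U g) :=
  (QuotientAddGroup.mk' _).comp <|
    ((QuotientAddGroup.mk' _).comp (piAddHom fun s => (g s).ker.subtype)).codRestrict _
      fun z => by
        rw [AddMonoidHom.mem_ker]
        exact (FilterProduct.mk_eq_zero_iff _).2 (.of_forall fun s => (z s).2)

def cyclesToFilterProductHomology :
    (∀ s, (g s).ker) →+ FilterProduct U fun s => AddHomology (f s) (g s) :=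
  (QuotientAddGroup.mk' _).comp (piAddHom fun _ => QuotientAddGroup.mk' _)

theorem mem_ker_cyclesToHomologyFilterProduct (z : ∀ s, (g s).ker) :
    z ∈ (cyclesToHomologyFilterProduct U f g).ker ↔
      ∀ᶠ s in U, ((z s : (g s).ker) : B s) ∈ (f s).range := by
  simp only [AddMonoidHom.mem_ker, cyclesToHomologyFilterProduct, AddMonoidHom.comp_apply,
    QuotientAddGroup.mk'_apply, AddHomology.mk_eq_zero_iff, AddMonoidHom.codRestrict_apply,
    AddMonoidHom.mem_range]
  constructor
  · rintro ⟨a, ha⟩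
    obtain ⟨a, rfl⟩ := QuotientAddGroup.mk_surjective a
    filter_upwards [(FilterProduct.mk_eq_mk_iff _ _).1 ha] with s hs
    exact ⟨a s, hs⟩
  · intro hz
    obtain ⟨a, ha⟩ := Filter.skolem.1 hz
    exact ⟨QuotientAddGroup.mk a, (FilterProduct.mk_eq_mk_iff _ _).2 ha⟩

theorem mem_ker_cyclesToFilterProductHomology (z : ∀ s, (g s).ker) :
    z ∈ (cyclesToFilterProductHomology U f g).ker ↔
      ∀ᶠ s in U, ((z s : (g s).ker) : B s) ∈ (f s).range := by
  rw [AddMonoidHom.mem_ker]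
  exact (FilterProduct.mk_eq_zero_iff _).trans <|
    Filter.eventually_congr (.of_forall fun s => AddHomology.mk_eq_zero_iff (z s))

theorem cyclesToHomologyFilterProduct_surjective :
    Function.Surjective (cyclesToHomologyFilterProduct U f g) := by
  rintro ⟨⟨b, hb⟩⟩
  obtain ⟨b, rfl⟩ := QuotientAddGroup.mk_surjective b
  have hb : ∀ᶠ s in U, g s (b s) = 0 := (FilterProduct.mk_eq_zero_iff _).1 hb
  have hcycle : ∀ᶠ s in U, ∃ z : (g s).ker, (z : B s) = b s :=
    hb.mono fun s hs => ⟨⟨b s, hs⟩, rfl⟩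
  obtain ⟨z, hz⟩ := Filter.skolem.1 hcycle
  exact ⟨z, congrArg QuotientAddGroup.mk (Subtype.ext ((FilterProduct.mk_eq_mk_iff _ _).2 hz))⟩

theorem cyclesToFilterProductHomology_surjective :
    Function.Surjective (cyclesToFilterProductHomology U f g) :=
  (QuotientAddGroup.mk'_surjective _).comp
    (Function.Surjective.piMap fun _ => QuotientAddGroup.mk'_surjective _)

noncomputable def homologyFilterProductEquiv :
    AddHomology (FilterProduct.map U f) (FilterProduct.map U g) ≃+
      FilterProduct U fun s => AddHomology (f s) (g s) :=
  (QuotientAddGroup.quotientKerEquivOfSurjective _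
      (cyclesToHomologyFilterProduct_surjective U f g)).symm.trans <|
    (QuotientAddGroup.quotientAddEquivOfEq <| AddSubgroup.ext fun z =>
      (mem_ker_cyclesToHomologyFilterProduct U f g z).trans
        (mem_ker_cyclesToFilterProductHomology U f g z).symm).trans <|
    QuotientAddGroup.quotientKerEquivOfSurjective _
      (cyclesToFilterProductHomology_surjective U f g)

end FilterProduct

theorem duBois_stmt15_general (S : Type*) (U : Filter S)
    (k : S → Type*) [∀ s, Field (k s)]
    (A B C : S → Type*)
    [∀ s, AddCommGroup (A s)] [∀ s, AddCommGroup (B s)] [∀ s, AddCommGroup (C s)]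
    [∀ s, Module (k s) (A s)] [∀ s, Module (k s) (B s)] [∀ s, Module (k s) (C s)]
    (f : ∀ s, A s →ₗ[k s] B s) (g : ∀ s, B s →ₗ[k s] C s) :
    Nonempty (
      -- cohomology of the filter product complex
      ((AddMonoidHom.ker
          (QuotientAddGroup.map (filterAddSubgroup S U B) (filterAddSubgroup S U C)
            (piAddHom fun s => (g s).toAddMonoidHom) (piAddHom_le U _))) ⧸
        (AddMonoidHom.range
          (QuotientAddGroup.map (filterAddSubgroup S U A) (filterAddSubgroup S U B)
            (piAddHom fun s => (f s).toAddMonoidHom) (piAddHom_le U _))).addSubgroupOf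
          (AddMonoidHom.ker
            (QuotientAddGroup.map (filterAddSubgroup S U B) (filterAddSubgroup S U C)
              (piAddHom fun s => (g s).toAddMonoidHom) (piAddHom_le U _))))
      ≃+
      -- filter product of the cohomologies
      ((∀ s, (AddMonoidHom.ker (g s).toAddMonoidHom ⧸
          (AddMonoidHom.range (f s).toAddMonoidHom).addSubgroupOf
            (AddMonoidHom.ker (g s).toAddMonoidHom))) ⧸
        filterAddSubgroup S U (fun s => AddMonoidHom.ker (g s).toAddMonoidHom ⧸
          (AddMonoidHom.range (f s).toAddMonoidHom).addSubgroupOf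
            (AddMonoidHom.ker (g s).toAddMonoidHom)))) :=
  ⟨homologyFilterProductEquiv U (fun s => (f s).toAddMonoidHom) fun s => (g s).toAddMonoidHom⟩

/-- cohomology commutes with filter products.  We model the
cochain complexes `C_s^•` of `k_s`-vector spaces around a fixed degree `i` by
three terms `A s → B s → C s` with composite zero, so that
`H^i(C_s^•) = ker (g s) / im (f s)`.  The filter product complex
`∏ C_s^• ⊗_{∏ k_s} (∏ k_s / U)` is the complex of quotients by the subgroups
of families vanishing along `U` (tensoring with `∏ k_s / U` is exactly this
quotient), and the theorem asserts that its cohomology is isomorphic to the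
filter product `(∏_s H^i(C_s^•)) / U` of the cohomologies. -/
theorem duBois_stmt15 (S : Type*) (U : Filter S) [U.NeBot]
    (k : S → Type*) [∀ s, Field (k s)]
    (A B C : S → Type*)
    [∀ s, AddCommGroup (A s)] [∀ s, AddCommGroup (B s)] [∀ s, AddCommGroup (C s)]
    [∀ s, Module (k s) (A s)] [∀ s, Module (k s) (B s)] [∀ s, Module (k s) (C s)]
    (f : ∀ s, A s →ₗ[k s] B s) (g : ∀ s, B s →ₗ[k s] C s)
    (hfg : ∀ s, (g s).comp (f s) = 0) :
    Nonempty (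
      -- cohomology of the filter product complex
      ((AddMonoidHom.ker
          (QuotientAddGroup.map (filterAddSubgroup S U B) (filterAddSubgroup S U C)
            (piAddHom fun s => (g s).toAddMonoidHom) (piAddHom_le U _))) ⧸
        (AddMonoidHom.range
          (QuotientAddGroup.map (filterAddSubgroup S U A) (filterAddSubgroup S U B)
            (piAddHom fun s => (f s).toAddMonoidHom) (piAddHom_le U _))).addSubgroupOf
          (AddMonoidHom.ker
            (QuotientAddGroup.map (filterAddSubgroup S U B) (filterAddSubgroup S U C)
              (piAddHom fun s => (g s).toAddMonoidHom) (piAddHom_le U _))))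
      ≃+
      -- filter product of the cohomologies
      ((∀ s, (AddMonoidHom.ker (g s).toAddMonoidHom ⧸
          (AddMonoidHom.range (f s).toAddMonoidHom).addSubgroupOf
            (AddMonoidHom.ker (g s).toAddMonoidHom))) ⧸
        filterAddSubgroup S U (fun s => AddMonoidHom.ker (g s).toAddMonoidHom ⧸
          (AddMonoidHom.range (f s).toAddMonoidHom).addSubgroupOf
            (AddMonoidHom.ker (g s).toAddMonoidHom)))) :=
  duBois_stmt15_general S U k A B C f g
end

section
/- Let U be an ultrafilter on a set S and k_s fields. Inside the ring ∏_s (k_s[x_0,…,x_n]) / U there is a natural embedding of the polynomial ring (∏_s k_s / U)[x_0,…,x_n], whose image consists exactly of the classes of families (f_s) of finite degree, i.e. those for which there exists d ∈ ℕ with deg f_s ≤ d for almost all s (with respect to U). -/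
/-!
Every polynomial over `∏ k_s / F` lifts to a polynomial `P` over `∏ k_s`, and the map sends it to
the class of the family of coordinate polynomials `P_s`. These have degree at most `deg P`, and
they vanish for almost all `s` only if every coefficient of `P` does; this gives injectivity and
one inclusion of the range. Conversely, with finitely many variables only finitely many monomials
have degree `≤ d`, so a family whose degrees are almost all `≤ d` agrees almost everywhere with the
coordinate family of a single polynomial over `∏ k_s`.
-/

/-- The ideal of a product ring consisting of families vanishing on a set of `F`. -/
def filterIdeal (S : Type*) (F : Filter S) (k : S → Type*) [∀ s, CommRing (k s)] :
    Ideal (∀ s, k s) where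
  carrier := {f | {s | f s = 0} ∈ F}
  zero_mem' := by simp
  add_mem' := by
    intro a b ha hb
    exact Filter.mem_of_superset (Filter.inter_mem ha hb) fun s hs => by
      have h1 : a s = 0 := hs.1
      have h2 : b s = 0 := hs.2
      show a s + b s = 0
      simp [h1, h2]
  smul_mem' := by
    intro c f hf
    exact Filter.mem_of_superset hf fun s hs => by
      have h1 : f s = 0 := hs
      show c s * f s = 0
      simp [h1]

open MvPolynomial

theorem MvPolynomial.totalDegree_map_le {σ R R' : Type*} [CommSemiring R] [CommSemiring R']
    (f : R →+* R') (p : MvPolynomial σ R) : (map f p).totalDegree ≤ p.totalDegree :=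
  Finset.sup_mono (support_map_subset f p)

theorem MvPolynomial.sum_monomial_coeff_of_support_subset {σ R : Type*} [CommSemiring R]
    {p : MvPolynomial σ R} {T : Finset (σ →₀ ℕ)} (hT : p.support ⊆ T) :
    ∑ m ∈ T, monomial m (p.coeff m) = p := by
  rw [← Finset.sum_subset hT fun m _ hm => by rw [notMem_support_iff.1 hm, map_zero]]
  exact p.support_sum_monomial_coeff

section FilterProduct

variable {S : Type*} {F : Filter S}

theorem mem_filterIdeal {k : S → Type*} [∀ s, CommRing (k s)] {f : ∀ s, k s} :
    f ∈ filterIdeal S F k ↔ ∀ᶠ s in F, f s = 0 :=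
  Iff.rfl

theorem filterIdeal_le_comap_pi {k l : S → Type*} [∀ s, CommRing (k s)] [∀ s, CommRing (l s)]
    (g : ∀ s, k s →+* l s) :
    filterIdeal S F k ≤
      (filterIdeal S F l).comap (RingHom.pi fun s => (g s).comp (Pi.evalRingHom k s)) :=
  fun _ ha => mem_filterIdeal.2 <| (mem_filterIdeal.1 ha).mono fun s hs => by simp [hs]

variable (F) (k : S → Type*) [∀ s, CommRing (k s)] (σ : Type*)

noncomputable def filterProductPolyMap :
    MvPolynomial σ ((∀ s, k s) ⧸ filterIdeal S F k) →+*
      (∀ s, MvPolynomial σ (k s)) ⧸ filterIdeal S F (fun s => MvPolynomial σ (k s)) :=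
  eval₂Hom (Ideal.quotientMap _ _ (filterIdeal_le_comap_pi fun _ => C))
    fun i => Ideal.Quotient.mk _ fun _ => X i

variable {F k σ}

theorem filterProductPolyMap_C (a : ∀ s, k s) :
    filterProductPolyMap F k σ (C (Ideal.Quotient.mk _ a)) =
      Ideal.Quotient.mk _ fun s => C (a s) :=
  (eval₂Hom_C _ _ _).trans Ideal.quotientMap_mk

theorem filterProductPolyMap_X (i : σ) :
    filterProductPolyMap F k σ (X i) = Ideal.Quotient.mk _ fun _ => X i :=
  eval₂Hom_X' _ _ _

/-- The paper's description of the map: lift the coefficients to the product, then take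
coordinates. -/
theorem filterProductPolyMap_map_mk (P : MvPolynomial σ (∀ s, k s)) :
    filterProductPolyMap F k σ (map (Ideal.Quotient.mk (filterIdeal S F k)) P) =
      Ideal.Quotient.mk (filterIdeal S F fun s => MvPolynomial σ (k s))
        fun s => map (Pi.evalRingHom k s) P := by
  suffices (filterProductPolyMap F k σ).comp (map (Ideal.Quotient.mk _)) =
      (Ideal.Quotient.mk _).comp (RingHom.pi fun s => map (Pi.evalRingHom k s)) from
    RingHom.congr_fun this P
  refine ringHom_ext (fun a => ?_) fun i => ?_
  · simp only [RingHom.comp_apply, map_C, filterProductPolyMap_C]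
    congr 1; funext s; simp
  · simp only [RingHom.comp_apply, map_X, filterProductPolyMap_X]
    congr 1; funext s; simp

theorem filterProductPolyMap_injective : Function.Injective (filterProductPolyMap F k σ) := by
  refine (injective_iff_map_eq_zero _).2 fun p hp => ?_
  obtain ⟨P, rfl⟩ := map_surjective _ Ideal.Quotient.mk_surjective p
  rw [filterProductPolyMap_map_mk, Ideal.Quotient.eq_zero_iff_mem, mem_filterIdeal] at hp
  ext m
  rw [coeff_map, coeff_zero, Ideal.Quotient.eq_zero_iff_mem, mem_filterIdeal]
  exact hp.mono fun s hs => by simpa [coeff_map] using congr_arg (coeff m) hs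

theorem mk_mem_range_filterProductPolyMap {f : ∀ s, MvPolynomial σ (k s)} {T : Finset (σ →₀ ℕ)}
    (hT : ∀ᶠ s in F, (f s).support ⊆ T) :
    Ideal.Quotient.mk _ f ∈ Set.range (filterProductPolyMap F k σ) := by
  refine ⟨map (Ideal.Quotient.mk _) (∑ m ∈ T, monomial m fun s => (f s).coeff m), ?_⟩
  rw [filterProductPolyMap_map_mk, Ideal.Quotient.eq, mem_filterIdeal]
  refine hT.mono fun s hs => ?_
  simp [sum_monomial_coeff_of_support_subset hs]

theorem range_filterProductPolyMap [Finite σ] :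
    Set.range (filterProductPolyMap F k σ) = {q | ∃ f : ∀ s, MvPolynomial σ (k s),
      Ideal.Quotient.mk (filterIdeal S F fun s => MvPolynomial σ (k s)) f = q ∧
        ∃ d : ℕ, ∀ᶠ s in F, (f s).totalDegree ≤ d} := by
  ext q
  constructor
  · rintro ⟨p, rfl⟩
    obtain ⟨P, rfl⟩ := map_surjective _ Ideal.Quotient.mk_surjective p
    refine ⟨fun s => map (Pi.evalRingHom k s) P, (filterProductPolyMap_map_mk (F := F) P).symm,
      P.totalDegree, .of_forall fun s => totalDegree_map_le (Pi.evalRingHom k s) P⟩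
  · rintro ⟨f, rfl, d, hd⟩
    refine mk_mem_range_filterProductPolyMap (T := (Finsupp.finite_of_degree_le d).toFinset) ?_
    exact hd.mono fun s hs m hm => (Set.Finite.mem_toFinset _).2 ((le_totalDegree hm).trans hs)

end FilterProduct

/-- For an ultrafilter `U` on `S` and fields `k s`, the polynomial
ring in variables `x_0, …, x_n` over the ultraproduct `∏ k_s / U` embeds
naturally into the ultraproduct `∏_s (k_s[x_0,…,x_n]) / U`, sending constants
and variables to the classes of the corresponding constant families, and its
image consists exactly of the classes of families `(f_s)` of finite degree,
i.e. those with `deg f_s ≤ d` for almost all `s` for some `d ∈ ℕ`. -/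
theorem duBois_stmt17 (S : Type*) (k : S → Type*) [∀ s, Field (k s)]
    (U : Ultrafilter S) (n : ℕ) :
    ∃ φ : MvPolynomial (Fin (n + 1)) ((∀ s, k s) ⧸ filterIdeal S (U : Filter S) k) →+*
        ((∀ s, MvPolynomial (Fin (n + 1)) (k s)) ⧸
          filterIdeal S (U : Filter S) (fun s => MvPolynomial (Fin (n + 1)) (k s))),
      Function.Injective φ ∧
      (∀ a : ∀ s, k s,
        φ (MvPolynomial.C (Ideal.Quotient.mk (filterIdeal S (U : Filter S) k) a)) =
          Ideal.Quotient.mk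
            (filterIdeal S (U : Filter S) (fun s => MvPolynomial (Fin (n + 1)) (k s)))
            (fun s => MvPolynomial.C (a s))) ∧
      (∀ i : Fin (n + 1),
        φ (MvPolynomial.X i) =
          Ideal.Quotient.mk
            (filterIdeal S (U : Filter S) (fun s => MvPolynomial (Fin (n + 1)) (k s)))
            (fun _s => MvPolynomial.X i)) ∧
      Set.range φ = {q | ∃ f : ∀ s, MvPolynomial (Fin (n + 1)) (k s),
        Ideal.Quotient.mk
            (filterIdeal S (U : Filter S) (fun s => MvPolynomial (Fin (n + 1)) (k s))) f = q ∧
        ∃ d : ℕ, {s | (f s).totalDegree ≤ d} ∈ U} :=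
  ⟨filterProductPolyMap U k (Fin (n + 1)), filterProductPolyMap_injective, filterProductPolyMap_C,
    filterProductPolyMap_X, range_filterProductPolyMap (F := (U : Filter S)) (k := k)⟩
end
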